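/- For a binary separable generalized Goppa code Γ(L,G) with all code locators of even degree, the minimum Hamming distance is at least (2r+2)/l, where r = deg G and l = max_i deg f_i. -/

import Mathlib

open Polynomial

/-- The binary generalized Goppa code: codewords are binary vectors `c` such that
`∑_{i ∈ supp c} f_i'(x)/f_i(x) ≡ 0 mod G(x)`, where division means multiplication by the
inverse in `F[X]/(G)`. -/
def goppaCode (F : Type*) [Field F] (n : ℕ) (f : Fin n → Polynomial F) (G : Polynomial F) :
    Set (Fin n → Bool) :=
  {c | (∑ i ∈ Finset.univ.filter (fun i => c i = true),
      Ideal.Quotient.mk (Ideal.span {G}) (Polynomial.derivative (f i)) *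
        Ring.inverse (Ideal.Quotient.mk (Ideal.span {G}) (f i))) = 0}

lemma derivative_finset_prod {F : Type*} [CommRing F] {ι : Type*} [DecidableEq ι]
    (s : Finset ι) (f : ι → F[X]) :
    derivative (∏ i ∈ s, f i) = ∑ i ∈ s, (∏ j ∈ s.erase i, f j) * derivative (f i) := by
  induction s using Finset.induction_on with
  | empty => simp
  | insert a s ha ih =>
    rw [Finset.prod_insert ha, derivative_mul, Finset.sum_insert ha,
      Finset.erase_insert ha, ih, Finset.mul_sum]
    congr 1
    · rw [mul_comm]
    · apply Finset.sum_congr rfl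
      intro i hi
      rw [Finset.erase_insert_of_ne (ne_of_mem_of_not_mem hi ha).symm,
        Finset.prod_insert (fun h => ha (Finset.mem_of_mem_erase h))]
      ring

theorem even_locator_goppa_min_distance
    (F : Type*) [Field F] [Fintype F] (m n l r : ℕ)
    (hq : Fintype.card F = 2 ^ m) (hl : 0 < l)
    (G : F[X]) (hGsep : Squarefree G) (hGdeg : G.natDegree = r)
    (f : Fin n → F[X]) (hirr : ∀ i, Irreducible (f i))
    (hcop : ∀ i j, i ≠ j → IsCoprime (f i) (f j))
    (hdeg : ∀ i, (f i).natDegree ≤ l)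
    (heven : ∀ i, Even (f i).natDegree)
    (hGcop : ∀ i, IsCoprime (f i) G) :
    ∀ c ∈ goppaCode F n f G, c ≠ (fun _ => false) →
      (2 * (r : ℝ) + 2) / l ≤ (Finset.univ.filter (fun i => c i = true)).card := by
  classical
  intro c hc hne
  -- characteristic 2
  haveI : CharP F (ringChar F) := ringChar.charP F
  obtain ⟨k, hpk, hcard⟩ := FiniteField.card F (ringChar F)
  have hchar : ringChar F = 2 := by
    have hdvd : ringChar F ∣ 2 ^ m := by
      rw [← hq, hcard]; exact dvd_pow_self _ k.pos.ne'
    exact (Nat.prime_dvd_prime_iff_eq hpk Nat.prime_two).mp (hpk.dvd_of_dvd_pow hdvd)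
  haveI hF2 : CharP F 2 := hchar ▸ ringChar.charP F
  haveI : ExpChar F 2 := ExpChar.prime Nat.prime_two
  set S := Finset.univ.filter (fun i : Fin n => c i = true) with hS
  have hc0 : (∑ i ∈ S,
      Ideal.Quotient.mk (Ideal.span {G}) (Polynomial.derivative (f i)) *
        Ring.inverse (Ideal.Quotient.mk (Ideal.span {G}) (f i))) = 0 := hc
  have hSne : S.Nonempty := by
    by_contra h
    apply hne
    funext i
    by_contra hci
    have hci' : c i = true := by
      cases hcc : c i
      · exact absurd (by simp [hcc]) hci
      · rfl
    exact h ⟨i, Finset.mem_filter.mpr ⟨Finset.mem_univ _, hci'⟩⟩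
  set P : F[X] := ∏ i ∈ S, f i with hP
  have hfne : ∀ i, f i ≠ 0 := fun i => (hirr i).ne_zero
  have hf2 : ∀ i, 2 ≤ (f i).natDegree := by
    intro i
    have h1 := (hirr i).natDegree_pos
    obtain ⟨t, ht⟩ := heven i
    omega
  have hPne : P ≠ 0 := Finset.prod_ne_zero_iff.mpr (fun i _ => hfne i)
  have hdegP : P.natDegree = ∑ i ∈ S, (f i).natDegree :=
    Polynomial.natDegree_prod _ _ (fun i _ => hfne i)
  have hdegP2 : 2 ≤ P.natDegree := by
    obtain ⟨i0, hi0⟩ := hSne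
    calc 2 ≤ (f i0).natDegree := hf2 i0
    _ ≤ ∑ i ∈ S, (f i).natDegree := Finset.single_le_sum (f := fun i => (f i).natDegree) (fun i _ => Nat.zero_le _) hi0
    _ = P.natDegree := hdegP.symm
  have hdegPeven : Even P.natDegree := by
    rw [hdegP, even_iff_two_dvd]
    exact Finset.dvd_sum fun i _ => (heven i).two_dvd
  -- the units
  have hGzero : Ideal.Quotient.mk (Ideal.span {G}) G = 0 :=
    Ideal.Quotient.eq_zero_iff_mem.mpr (Ideal.mem_span_singleton_self G)
  have hunit : ∀ i, IsUnit (Ideal.Quotient.mk (Ideal.span {G}) (f i)) := by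
    intro i
    obtain ⟨u, v, huv⟩ := hGcop i
    refine IsUnit.of_mul_eq_one (Ideal.Quotient.mk (Ideal.span {G}) u) ?_
    have h1 := congrArg (Ideal.Quotient.mk (Ideal.span {G})) huv
    simp only [map_add, map_mul, map_one, hGzero, mul_zero, add_zero] at h1
    rw [mul_comm]; exact h1
  -- G divides derivative P
  have hkey : Ideal.Quotient.mk (Ideal.span {G}) (derivative P) = 0 := by
    have hstep : Ideal.Quotient.mk (Ideal.span {G}) (derivative P)
        = (∑ i ∈ S, Ideal.Quotient.mk (Ideal.span {G}) (Polynomial.derivative (f i)) *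
            Ring.inverse (Ideal.Quotient.mk (Ideal.span {G}) (f i))) *
          Ideal.Quotient.mk (Ideal.span {G}) P := by
      rw [Finset.sum_mul, hP, derivative_finset_prod, map_sum]
      apply Finset.sum_congr rfl
      intro i hi
      rw [map_mul, ← Finset.mul_prod_erase S f hi, map_mul]
      have h1 : Ring.inverse (Ideal.Quotient.mk (Ideal.span {G}) (f i)) *
          Ideal.Quotient.mk (Ideal.span {G}) (f i) = 1 :=
        Ring.inverse_mul_cancel _ (hunit i)
      have h2 : Ideal.Quotient.mk (Ideal.span {G}) (Polynomial.derivative (f i)) *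
          Ring.inverse (Ideal.Quotient.mk (Ideal.span {G}) (f i)) *
          (Ideal.Quotient.mk (Ideal.span {G}) (f i) *
            Ideal.Quotient.mk (Ideal.span {G}) (∏ j ∈ S.erase i, f j))
          = Ideal.Quotient.mk (Ideal.span {G}) (∏ j ∈ S.erase i, f j) *
            Ideal.Quotient.mk (Ideal.span {G}) (Polynomial.derivative (f i)) *
            (Ring.inverse (Ideal.Quotient.mk (Ideal.span {G}) (f i)) *
              Ideal.Quotient.mk (Ideal.span {G}) (f i)) := by ring
      rw [h2, h1, mul_one]
    rw [hstep, hc0, zero_mul]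
  have hdvd : G ∣ derivative P := by
    rwa [Ideal.Quotient.eq_zero_iff_mem, Ideal.mem_span_singleton] at hkey
  -- P is separable, hence derivative P ≠ 0
  have hsep : P.Separable :=
    Polynomial.separable_prod' (fun i _ j _ hij => hcop i j hij)
      (fun i _ => PerfectField.separable_of_irreducible (hirr i))
  have hP' : derivative P ≠ 0 := by
    intro h0
    have h1 : IsCoprime P (derivative P) := hsep
    rw [h0] at h1
    have h2 := Polynomial.natDegree_eq_zero_of_isUnit (isCoprime_zero_right.mp h1)
    omega
  -- derivative P is a square
  have hdd : derivative (derivative P) = 0 := by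
    ext nn
    rw [coeff_derivative, coeff_derivative, coeff_zero, mul_assoc]
    have h3 : (((nn + 1 + 1) * (nn + 1) : ℕ) : F) = 0 := by
      rw [CharP.cast_eq_zero_iff F 2]
      exact Even.two_dvd (by rw [Nat.mul_comm]; exact Nat.even_mul_succ_self (nn + 1))
    push_cast at h3
    push_cast
    linear_combination (P.coeff (nn + 1 + 1)) * h3
  have hcontract := Polynomial.expand_contract 2 hdd (two_ne_zero)
  obtain ⟨Q, hQ⟩ := Polynomial.map_surjective (frobenius F 2) (surjective_frobenius F 2)
    ((derivative P).contract 2)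
  have hsq : derivative P = Q ^ 2 := by
    rw [← hcontract, ← hQ, ← Polynomial.map_expand, Polynomial.map_frobenius_expand]
  have hQne : Q ≠ 0 := by
    rintro rfl
    rw [zero_pow two_ne_zero] at hsq
    exact hP' hsq
  have hGQ : G ∣ Q := (hGsep.dvd_pow_iff_dvd two_ne_zero).mp (hsq ▸ hdvd)
  have hrQ : r ≤ Q.natDegree := hGdeg ▸ Polynomial.natDegree_le_of_dvd hGQ hQne
  have hdP' : (derivative P).natDegree = 2 * Q.natDegree := by
    rw [hsq, Polynomial.natDegree_pow, Nat.mul_comm]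
  have hlt : (derivative P).natDegree < P.natDegree :=
    Polynomial.natDegree_derivative_lt (by omega)
  have hkey2 : 2 * r + 2 ≤ P.natDegree := by
    obtain ⟨a, ha⟩ := hdegPeven
    omega
  have hsum : P.natDegree ≤ l * S.card := by
    rw [hdegP]
    calc ∑ i ∈ S, (f i).natDegree ≤ ∑ _i ∈ S, l := Finset.sum_le_sum (fun i _ => hdeg i)
    _ = l * S.card := by rw [Finset.sum_const, smul_eq_mul, Nat.mul_comm]
  have hfinal : 2 * r + 2 ≤ S.card * l := by
    rw [Nat.mul_comm] at hsum; omega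
  rw [div_le_iff₀ (by exact_mod_cast hl : (0:ℝ) < l)]
  have hcast : ((2 * r + 2 : ℕ) : ℝ) ≤ ((S.card * l : ℕ) : ℝ) := by exact_mod_cast hfinal
  push_cast at hcast
  linarith
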